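/- For every B > 0 and every real x, ∫_0^∞ (B/√(2πu³)) · e^{−B²/(2u) − x²u/2} du = e^{−B|x|}. -/

import Mathlib

/-!
Substituting `u = B²/s²` turns the integral into `√(2/π) ∫₀^∞ exp(-s²/2 - a²/(2s²)) ds` with
`a = B|x|`, and `s²/2 + a²/(2s²) = (s - a/s)²/2 + a`. So it suffices that
`∫₀^∞ g(s - a/s) ds = ∫₀^∞ g` for even integrable `g` (Cauchy–Schlömilch): the involution
`s ↦ a/s` of `(0, ∞)` shows `∫₀^∞ g(s - a/s) ds = ∫₀^∞ g(s - a/s) a/s² ds`, and the sum of the two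
is `∫_ℝ g` by the substitution `t = s - a/s`, an increasing bijection `(0, ∞) → ℝ`.
-/

open MeasureTheory Real Set

section ChangeOfVariables

variable {E : Type*} [NormedAddCommGroup E] [NormedSpace ℝ E]

theorem integral_comp_div_Ioi (g : ℝ → E) {a : ℝ} (ha : 0 < a) :
    ∫ s in Ioi 0, (a / s ^ 2) • g (a / s) = ∫ u in Ioi 0, g u := by
  have himage : (a / ·) '' Ioi (0 : ℝ) = Ioi 0 := by
    refine Subset.antisymm (image_subset_iff.2 fun s hs ↦ div_pos ha hs) fun u hu ↦ ?_
    exact ⟨a / u, div_pos ha hu, div_div_cancel₀ ha.ne'⟩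
  have hderiv : ∀ s ∈ Ioi (0 : ℝ), HasDerivWithinAt (a / ·) (-(a / s ^ 2)) (Ioi 0) s :=
    fun s hs ↦ by
      simpa [div_eq_mul_inv] using ((hasDerivAt_inv (ne_of_gt hs)).const_mul a).hasDerivWithinAt
  have hinj : InjOn (a / ·) (Ioi (0 : ℝ)) := fun s _ t _ hst ↦ by
    simpa [div_eq_mul_inv, ha.ne'] using hst
  have := integral_image_eq_integral_abs_deriv_smul measurableSet_Ioi hderiv hinj g
  rw [himage] at this
  rw [this]
  refine setIntegral_congr_fun measurableSet_Ioi fun s (hs : 0 < s) ↦ ?_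
  rw [abs_neg, abs_of_pos (by positivity)]

theorem integral_comp_div_sq_Ioi (g : ℝ → E) {b : ℝ} (hb : 0 < b) :
    ∫ s in Ioi 0, (2 * b / s ^ 3) • g (b / s ^ 2) = ∫ u in Ioi 0, g u := by
  rw [← integral_comp_div_Ioi g hb,
    ← integral_comp_rpow_Ioi_of_pos (g := fun t ↦ (b / t ^ 2) • g (b / t)) two_pos]
  refine setIntegral_congr_fun measurableSet_Ioi fun s (hs : 0 < s) ↦ ?_
  rw [smul_smul, rpow_two, show (2:ℝ) - 1 = 1 by norm_num, rpow_one]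
  congr 1
  field_simp

end ChangeOfVariables

section CauchySchlomilch

variable {E : Type*} [NormedAddCommGroup E] [NormedSpace ℝ E] {a : ℝ}

theorem exists_pos_sub_div_eq (ha : 0 < a) (t : ℝ) : ∃ s > 0, s - a / s = t := by
  set r := √(t ^ 2 + 4 * a)
  have hr : r ^ 2 = t ^ 2 + 4 * a := sq_sqrt (by positivity)
  have hs : 0 < t + r := by
    have : |t| < r := by rw [← sqrt_sq_eq_abs]; exact sqrt_lt_sqrt (sq_nonneg t) (by linarith)
    linarith [neg_abs_le t]
  refine ⟨(t + r) / 2, by positivity, ?_⟩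
  field_simp
  linear_combination hr

theorem image_sub_div_Ioi (ha : 0 < a) : (fun s ↦ s - a / s) '' Ioi 0 = univ :=
  eq_univ_of_forall fun t ↦ exists_pos_sub_div_eq ha t

theorem strictMonoOn_sub_div (ha : 0 < a) : StrictMonoOn (fun s ↦ s - a / s) (Ioi 0) :=
  fun s (hs : 0 < s) _ _ hst ↦ sub_lt_sub hst (div_lt_div_of_pos_left ha hs hst)

theorem hasDerivAt_sub_div {s : ℝ} (hs : s ≠ 0) :
    HasDerivAt (fun t ↦ t - a / t) (1 + a / s ^ 2) s := by
  have h := (hasDerivAt_id' s).fun_sub ((hasDerivAt_inv hs).const_mul a)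
  simpa only [mul_neg, sub_neg_eq_add, ← div_eq_mul_inv] using h

theorem abs_one_add_div_sq (ha : 0 ≤ a) (s : ℝ) : |1 + a / s ^ 2| = 1 + a / s ^ 2 :=
  abs_of_pos (by positivity)

theorem integrableOn_one_add_div_sq_smul_comp_sub_div_Ioi_iff (g : ℝ → E) (ha : 0 < a) :
    IntegrableOn (fun s ↦ (1 + a / s ^ 2) • g (s - a / s)) (Ioi 0) ↔ Integrable g := by
  have := integrableOn_image_iff_integrableOn_abs_deriv_smul measurableSet_Ioi
    (fun s hs ↦ (hasDerivAt_sub_div (ne_of_gt hs)).hasDerivWithinAt)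
    (strictMonoOn_sub_div ha).injOn g
  simpa only [image_sub_div_Ioi ha, integrableOn_univ, abs_one_add_div_sq ha.le] using this.symm

theorem integral_one_add_div_sq_smul_comp_sub_div_Ioi (g : ℝ → E) (ha : 0 < a) :
    ∫ s in Ioi 0, (1 + a / s ^ 2) • g (s - a / s) = ∫ t, g t := by
  have := integral_image_eq_integral_abs_deriv_smul measurableSet_Ioi
    (fun s hs ↦ (hasDerivAt_sub_div (ne_of_gt hs)).hasDerivWithinAt)
    (strictMonoOn_sub_div ha).injOn g
  simpa only [image_sub_div_Ioi ha, setIntegral_univ, abs_one_add_div_sq ha.le] using this.symm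

theorem integrableOn_comp_sub_div_Ioi {g : ℝ → E} (hg : Integrable g) (ha : 0 < a) :
    IntegrableOn (fun s ↦ g (s - a / s)) (Ioi 0) := by
  have hpos : ∀ s, 0 < 1 + a / s ^ 2 := fun s ↦ by positivity
  refine (((integrableOn_one_add_div_sq_smul_comp_sub_div_Ioi_iff g ha).2 hg).bdd_smul
    (φ := fun s ↦ (1 + a / s ^ 2)⁻¹) 1 (Measurable.aestronglyMeasurable (by fun_prop))
    (ae_of_all _ fun s ↦ ?_)).congr (ae_of_all _ fun s ↦ inv_smul_smul₀ (hpos s).ne' _)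
  rw [norm_inv, norm_of_nonneg (hpos s).le]
  exact inv_le_one_of_one_le₀ (le_add_of_nonneg_right (by positivity))

theorem integral_comp_sub_div_Ioi_of_even {g : ℝ → ℝ} (hg : Function.Even g) (hgi : Integrable g)
    (ha : 0 ≤ a) : ∫ s in Ioi 0, g (s - a / s) = ∫ s in Ioi 0, g s := by
  rcases ha.eq_or_lt with rfl | ha
  · simp
  have hint₁ := integrableOn_comp_sub_div_Ioi hgi ha
  have hint₂ : IntegrableOn (fun s ↦ (a / s ^ 2) • g (s - a / s)) (Ioi 0) := by
    refine (((integrableOn_one_add_div_sq_smul_comp_sub_div_Ioi_iff g ha).2 hgi).sub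
      hint₁).congr_fun (fun s _ ↦ ?_) measurableSet_Ioi
    simp only [Pi.sub_apply, add_smul, one_smul, add_sub_cancel_left]
  have hreflect : ∫ s in Ioi 0, (a / s ^ 2) • g (s - a / s) = ∫ s in Ioi 0, g (s - a / s) := by
    rw [← integral_comp_div_Ioi (fun s ↦ g (s - a / s)) ha]
    congr with s
    rw [div_div_cancel₀ ha.ne', ← neg_sub, hg]
  have htotal : ∫ x, g x = 2 * ∫ s in Ioi 0, g s := by
    rw [← integral_comp_abs]
    congr with x
    rcases abs_choice x with h | h <;> simp [h, hg x]
  rw [← integral_one_add_div_sq_smul_comp_sub_div_Ioi g ha] at htotal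
  simp only [add_smul, one_smul] at htotal
  rw [integral_add hint₁ hint₂, hreflect] at htotal
  linarith

end CauchySchlomilch

theorem integral_exp_neg_sq_div_two_sub_sq_div_sq_Ioi {a : ℝ} (ha : 0 ≤ a) :
    ∫ s in Ioi 0, exp (-(s ^ 2 / 2) - a ^ 2 / (2 * s ^ 2)) = √(2 * π) / 2 * exp (-a) := by
  have hgauss : ∫ s in Ioi 0, exp (-(1 / 2) * s ^ 2) = √(2 * π) / 2 := by
    rw [integral_gaussian_Ioi, div_div_eq_mul_div, div_one, mul_comm]
  calc ∫ s in Ioi 0, exp (-(s ^ 2 / 2) - a ^ 2 / (2 * s ^ 2))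
      = ∫ s in Ioi 0, exp (-a) * exp (-(1 / 2) * (s - a / s) ^ 2) :=
        setIntegral_congr_fun measurableSet_Ioi fun s (hs : 0 < s) ↦ by
          rw [← exp_add]
          congr 1
          field_simp
          ring
    _ = √(2 * π) / 2 * exp (-a) := by
      rw [integral_const_mul,
        integral_comp_sub_div_Ioi_of_even (g := fun t ↦ exp (-(1 / 2) * t ^ 2))
          (fun t ↦ by simp) (integrable_exp_neg_mul_sq one_half_pos) ha, hgauss, mul_comm]

theorem stable_half_gaussian_mixture (B : ℝ) (hB : 0 < B) (x : ℝ) :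
    ∫ u in Ioi (0:ℝ), (B / Real.sqrt (2 * π * u^3)) *
        Real.exp (-(B^2 / (2*u)) - x^2 * u / 2) =
      Real.exp (-(B * |x|)) := by
  have hkernel : ∀ s ∈ Ioi (0 : ℝ), (2 * B ^ 2 / s ^ 3) • ((B / √(2 * π * (B ^ 2 / s ^ 2) ^ 3)) *
      exp (-(B ^ 2 / (2 * (B ^ 2 / s ^ 2))) - x ^ 2 * (B ^ 2 / s ^ 2) / 2)) =
      2 / √(2 * π) * exp (-(s ^ 2 / 2) - (B * |x|) ^ 2 / (2 * s ^ 2)) := fun s (hs : 0 < s) ↦ by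
    have hsqrt : √(2 * π * (B ^ 2 / s ^ 2) ^ 3) = √(2 * π) * (B / s) ^ 3 := by
      rw [sqrt_mul (by positivity), show (B ^ 2 / s ^ 2) ^ 3 = ((B / s) ^ 3) ^ 2 by ring,
        sqrt_sq (by positivity)]
    rw [hsqrt, smul_eq_mul, mul_pow, sq_abs]
    field_simp
  rw [← integral_comp_div_sq_Ioi _ (pow_pos hB 2), setIntegral_congr_fun measurableSet_Ioi hkernel,
    integral_const_mul, integral_exp_neg_sq_div_two_sub_sq_div_sq_Ioi (by positivity)]
  field_simp
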